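/- arXiv:1808.09748 — 2 statements merged into one kernel-verified Lean document; each statement's English description precedes it below -/
import Mathlib

section
/- Let a < 1 and let s_n → ∞ with s_n ≤ n^υ for some υ ∈ (0,1). Let C denote the class of two-sided thresholding-based multiple testing procedures, i.e. those of the form φ_i(X) = 1{X_i ≥ τ₁(X) or −X_i ≥ τ₂(X)} for measurable τ₁(X), τ₂(X) ≥ 0. Then, with the classification risk R(θ₀,φ) = FDR(θ₀,φ) + FNR(θ₀,φ): liminf_{n→∞} inf_{φ ∈ C} sup_{θ₀ ∈ L₀[s_n;a]} R(θ₀,φ) ≥ 1. -/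
open MeasureTheory ProbabilityTheory Filter Set
open scoped Classical ENNReal

/-- The standard normal density. -/
noncomputable def stdphi (x : ℝ) : ℝ := (Real.sqrt (2 * Real.pi))⁻¹ * Real.exp (-(x ^ 2) / 2)

/-- The standard normal upper tail function `Φ̄`. -/
noncomputable def Phibar (s : ℝ) : ℝ := ∫ x in Set.Ioi s, stdphi x

/-- The inverse of `Φ̄` (as the generalized inverse). -/
noncomputable def PhibarInv (y : ℝ) : ℝ := sInf {x : ℝ | Phibar x ≤ y}

/-- The convolution `g = γ ⋆ φ`. -/
noncomputable def gconv (γ : ℝ → ℝ) (x : ℝ) : ℝ := ∫ u, γ (x - u) * stdphi u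

/-- The upper tail `Ḡ` of `g = γ ⋆ φ`. -/
noncomputable def Gbar (γ : ℝ → ℝ) (s : ℝ) : ℝ := ∫ x in Set.Ioi s, gconv γ x

/-- The ℓ-value `ℓ(x; w, g)`. -/
noncomputable def lval (γ : ℝ → ℝ) (w x : ℝ) : ℝ :=
  ((1 - w) * stdphi x) / ((1 - w) * stdphi x + w * gconv γ x)

/-- The q-value `q(x; w, g)`. -/
noncomputable def qval (γ : ℝ → ℝ) (w x : ℝ) : ℝ :=
  ((1 - w) * Phibar |x|) / ((1 - w) * Phibar |x| + w * Gbar γ |x|)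

/-- The law of the noise vector `ε = (ε₁, …, ε_n)`, i.i.d. standard normals. -/
noncomputable def noise (n : ℕ) : Measure (Fin n → ℝ) :=
  Measure.pi fun _ => gaussianReal 0 1

/-- The false discovery proportion of procedure `φ` at configuration `θ`, observed data `x`. -/
noncomputable def FDP (n : ℕ) (θ : Fin n → ℝ) (φ : (Fin n → ℝ) → Fin n → Prop)
    (x : Fin n → ℝ) : ℝ :=
  (∑ i, (if θ i = 0 ∧ φ x i then (1 : ℝ) else 0)) /
    max 1 (∑ i, (if φ x i then (1 : ℝ) else 0))

/-- The false discovery rate `FDR(θ, φ)` in the Gaussian sequence model `X = θ + ε`. -/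
noncomputable def FDR (n : ℕ) (θ : Fin n → ℝ) (φ : (Fin n → ℝ) → Fin n → Prop) : ℝ :=
  ∫ e, FDP n θ φ (fun i => θ i + e i) ∂(noise n)

/-- The false negative proportion. -/
noncomputable def FNP (n : ℕ) (θ : Fin n → ℝ) (φ : (Fin n → ℝ) → Fin n → Prop)
    (x : Fin n → ℝ) : ℝ :=
  (∑ i, (if θ i ≠ 0 ∧ ¬ φ x i then (1 : ℝ) else 0)) /
    max 1 (∑ i, (if θ i ≠ 0 then (1 : ℝ) else 0))

/-- The false negative rate `FNR(θ, φ)` in the Gaussian sequence model `X = θ + ε`. -/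
noncomputable def FNR (n : ℕ) (θ : Fin n → ℝ) (φ : (Fin n → ℝ) → Fin n → Prop) : ℝ :=
  ∫ e, FNP n θ φ (fun i => θ i + e i) ∂(noise n)

/-- The sparsity class `ℓ₀[s]`. -/
def ell0 (n s : ℕ) : Set (Fin n → ℝ) :=
  {θ | (Finset.univ.filter (fun i => θ i ≠ 0)).card ≤ s}

/-- The class `L₀[s; a]` of strong `s`-sparse signals. -/
def calL0 (n s : ℕ) (a : ℝ) : Set (Fin n → ℝ) :=
  {θ | (Finset.univ.filter (fun i => θ i ≠ 0)).card = s ∧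
    ∀ i, θ i ≠ 0 → a * Real.sqrt (2 * Real.log ((n : ℝ) / (s : ℝ))) ≤ |θ i|}

/-- The class `L₀⁻[s; b]` of bounded `s`-sparse signals. -/
def calL0minus (n s : ℕ) (b : ℝ) : Set (Fin n → ℝ) :=
  {θ | (Finset.univ.filter (fun i => θ i ≠ 0)).card = s ∧ ∀ i, |θ i| ≤ b}

/-- The class of two-sided thresholding-based multiple testing procedures. -/
def IsThresholding (n : ℕ) (φ : (Fin n → ℝ) → Fin n → Prop) : Prop :=
  ∃ τ₁ τ₂ : (Fin n → ℝ) → ℝ, Measurable τ₁ ∧ Measurable τ₂ ∧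
    (∀ x, 0 ≤ τ₁ x ∧ 0 ≤ τ₂ x) ∧
    (∀ x i, φ x i ↔ (τ₁ x ≤ x i ∨ τ₂ x ≤ -(x i)))

/-- A unimodal symmetric slab density satisfying assumptions (A1)–(A3) of the paper,
with Lipschitz constant `Λ` in (A1) and tail exponent `κ` in (A2). -/
structure SlabDensity (γ : ℝ → ℝ) (Λ κ : ℝ) : Prop where
  pos : ∀ x, 0 < γ x
  symm : ∀ x, γ (-x) = γ x
  unimodal : AntitoneOn γ (Set.Ici 0)
  density : ∫ x, γ x = 1
  lam_pos : 0 < Λ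
  loglip : ∀ x y : ℝ, |Real.log (γ x) - Real.log (γ y)| ≤ Λ * |x - y|
  kappa_mem : κ ∈ Set.Icc (1 : ℝ) 2
  tail : ∃ c C : ℝ, 0 < c ∧ 0 < C ∧ ∃ y₀ : ℝ, ∀ y ≥ y₀,
    c * y ^ (κ - 1) ≤ (∫ u in Set.Ioi y, γ u) / γ y ∧
      (∫ u in Set.Ioi y, γ u) / γ y ≤ C * y ^ (κ - 1)
  sqbdd : ∃ M : ℝ, ∀ y : ℝ, y ^ 2 * γ y ≤ M

/-- The marginal log-likelihood `L(w)` of the spike-and-slab weight `w`. -/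
noncomputable def logL (γ : ℝ → ℝ) (n : ℕ) (x : Fin n → ℝ) (w : ℝ) : ℝ :=
  ∑ i, Real.log ((1 - w) * stdphi (x i) + w * gconv γ (x i))

/-- `what` is a marginal maximum likelihood estimator of the weight over `[1/n, 1]`. -/
def IsMMLE (γ : ℝ → ℝ) (n : ℕ) (what : (Fin n → ℝ) → ℝ) : Prop :=
  ∀ x : Fin n → ℝ, what x ∈ Set.Icc ((n : ℝ)⁻¹) 1 ∧
    ∀ w ∈ Set.Icc ((n : ℝ)⁻¹) 1, logL γ n x w ≤ logL γ n x (what x)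

/-- The slab distribution (measure with density `γ`). -/
noncomputable def slabMeasure (γ : ℝ → ℝ) : Measure ℝ :=
  volume.withDensity fun x => ENNReal.ofReal (γ x)

/-- The spike and slab distribution `(1−w)δ₀ + wG`. -/
noncomputable def spikeSlab (w : ℝ) (γ : ℝ → ℝ) : Measure ℝ :=
  (ENNReal.ofReal (1 - w)) • Measure.dirac 0 + (ENNReal.ofReal w) • slabMeasure γ

/-- The spike and slab prior `Π_{w,γ} = ((1−w)δ₀ + wG)^{⊗n}`. -/
noncomputable def prior (n : ℕ) (w : ℝ) (γ : ℝ → ℝ) : Measure (Fin n → ℝ) :=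
  Measure.pi fun _ => spikeSlab w γ

/-- The Bayes FDR: the FDR integrated with respect to the prior. -/
noncomputable def BFDR (n : ℕ) (w : ℝ) (γ : ℝ → ℝ) (φ : (Fin n → ℝ) → Fin n → Prop) : ℝ :=
  ∫ θ, FDR n θ φ ∂(prior n w γ)

/-- Probability of an event `A(X)` under the joint law of `(θ, X)`, `θ ~ Π_{w,γ}`, `X = θ + ε`. -/
noncomputable def jointProb (n : ℕ) (w : ℝ) (γ : ℝ → ℝ) (A : (Fin n → ℝ) → Prop) : ℝ :=
  ∫ θ, (∫ e, (if A (fun i => θ i + e i) then (1 : ℝ) else 0) ∂(noise n)) ∂(prior n w γ)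

/-- The posterior cdf of a single coordinate `θᵢ` given `Xᵢ = x`, for the spike and slab prior
with weight `w` and slab `γ`. -/
noncomputable def postCDF (γ : ℝ → ℝ) (w x z : ℝ) : ℝ :=
  lval γ w x * (if (0 : ℝ) ≤ z then 1 else 0) +
    (1 - lval γ w x) * (∫ u in Set.Iic z, stdphi (x - u) * γ u) / gconv γ x

/-- The `u`-quantile of the marginal posterior of `θᵢ` given `Xᵢ = x`. -/
noncomputable def postQuantile (γ : ℝ → ℝ) (w x u : ℝ) : ℝ :=
  sInf {z : ℝ | u ≤ postCDF γ w x z}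

/-!
The adversary places `s` equal signals of size `μ = b √(2 log (n/s))`, with `a ≤ b < 1`, and fixes
the level `t = (b+1)/2 · √(2 log (n/s))`, strictly between `μ` and the detection boundary. For every
outcome, a thresholding procedure either has `τ₁ ≤ t`, and then rejects all null coordinates above
`t`, of which there are about `(n - s) Φ̄(t) ≫ s` by Chebyshev, so its FDP is close to one; or it has
`τ₁ > t`, and then misses every signal whose noise lies in `(-μ, t - μ)`, which is almost all of
them, so its FNP is close to one.
-/

open scoped Finset Topology

theorem measureReal_sum_lt_half_mean_le {Ω ι : Type*} [MeasurableSpace Ω] {μ : Measure Ω}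
    [IsProbabilityMeasure μ] {X : ι → Ω → ℝ} {T : Finset ι} {p : ℝ}
    (hXm : ∀ i ∈ T, Measurable (X i)) (hX : ∀ i ∈ T, ∀ ω, X i ω ∈ Icc 0 1)
    (hmean : ∀ i ∈ T, μ[X i] = p) (hindep : Set.Pairwise ↑T fun i j => X i ⟂ᵢ[μ] X j) :
    μ.real {ω | ∑ i ∈ T, X i ω < #T * p / 2} ≤ 4 / (#T * p) := by
  have hL2 : ∀ i ∈ T, MemLp (X i) 2 μ := fun i hi =>
    memLp_of_bounded (ae_of_all _ (hX i hi)) (hXm i hi).aestronglyMeasurable 2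
  have hp : 0 ≤ #T * p := by
    rcases T.eq_empty_or_nonempty with rfl | ⟨i, hi⟩
    · simp
    · rw [← hmean i hi]
      exact mul_nonneg (Nat.cast_nonneg _) (integral_nonneg fun ω => (hX i hi ω).1)
  rcases hp.eq_or_lt with hp0 | hp0
  · rw [← hp0]
    simp [not_lt.mpr (Finset.sum_nonneg fun i hi => (hX i hi _).1)]
  have hmean_sum : μ[∑ i ∈ T, X i] = #T * p := by
    simp only [Finset.sum_apply]
    rw [integral_finsetSum T fun i hi => (hL2 i hi).integrable one_le_two,
      Finset.sum_congr rfl hmean, Finset.sum_const, nsmul_eq_mul]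
  have hvar : Var[∑ i ∈ T, X i; μ] ≤ #T * p := by
    rw [IndepFun.variance_sum hL2 hindep]
    calc ∑ i ∈ T, Var[X i; μ] ≤ ∑ _i ∈ T, p := Finset.sum_le_sum fun i hi => by
          -- Bhatia–Davis: `Var[X i] ≤ (1 - p) p`
          have h := variance_le_sub_mul_sub (μ := μ) (ae_of_all _ (hX i hi)) (hXm i hi).aemeasurable
          rw [hmean i hi] at h
          have := hmean i hi ▸ integral_nonneg fun ω => (hX i hi ω).1
          nlinarith
      _ = #T * p := by simp
  have hsub : {ω | ∑ i ∈ T, X i ω < #T * p / 2} ⊆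
      {ω | #T * p / 2 ≤ |(∑ i ∈ T, X i) ω - μ[∑ i ∈ T, X i]|} := by
    intro ω hω
    simp only [mem_ofPred_eq] at hω ⊢
    rw [hmean_sum, Finset.sum_apply, abs_sub_comm, abs_of_pos (by linarith)]
    linarith
  have hcheb := meas_ge_le_variance_div_sq (memLp_finsetSum' T hL2) (half_pos hp0)
  calc μ.real {ω | ∑ i ∈ T, X i ω < #T * p / 2}
      ≤ Var[∑ i ∈ T, X i; μ] / (#T * p / 2) ^ 2 :=
        ENNReal.toReal_le_of_le_ofReal (div_nonneg (variance_nonneg _ _) (sq_nonneg _))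
          ((measure_mono hsub).trans hcheb)
    _ ≤ #T * p / (#T * p / 2) ^ 2 := by gcongr
    _ = 4 / (#T * p) := by field_simp; ring

theorem integral_le_one_of_norm_le_one {α : Type*} [MeasurableSpace α] {μ : Measure α}
    [IsProbabilityMeasure μ] {f : α → ℝ} (hf : ∀ a, ‖f a‖ ≤ 1) : ∫ a, f a ∂μ ≤ 1 := by
  simpa using (le_abs_self _).trans (norm_integral_le_of_norm_le_const (ae_of_all μ hf))

open Real in
theorem gaussianReal_real_Ici_ge {t : ℝ} (ht : 0 ≤ t) :
    (√(2 * π))⁻¹ * exp (-(t + 1) ^ 2 / 2) ≤ (gaussianReal 0 1).real (Ici t) := by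
  have hpdf : ∀ x ∈ Icc t (t + 1),
      (√(2 * π))⁻¹ * exp (-(t + 1) ^ 2 / 2) ≤ gaussianPDFReal 0 1 x := by
    intro x hx
    simp only [gaussianPDFReal, NNReal.coe_one, mul_one, sub_zero]
    gcongr <;> linarith [hx.1, hx.2]
  calc (√(2 * π))⁻¹ * exp (-(t + 1) ^ 2 / 2)
      = (√(2 * π))⁻¹ * exp (-(t + 1) ^ 2 / 2) * volume.real (Icc t (t + 1)) := by simp
    _ ≤ ∫ x in Icc t (t + 1), gaussianPDFReal 0 1 x :=
        setIntegral_ge_of_const_le_real measurableSet_Icc (by simp) hpdf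
          (integrable_gaussianPDFReal 0 1).integrableOn
    _ = (gaussianReal 0 1).real (Icc t (t + 1)) := by
        rw [measureReal_def, gaussianReal_apply_eq_integral 0 one_ne_zero, ENNReal.toReal_ofReal
          (setIntegral_nonneg measurableSet_Icc fun x _ => gaussianPDFReal_nonneg 0 1 x)]
    _ ≤ (gaussianReal 0 1).real (Ici t) := measureReal_mono Icc_subset_Ici_self

theorem gaussianReal_real_Ici_eq (x : ℝ) :
    (gaussianReal 0 1).real (Ici x) = (gaussianReal 0 1).real (Iic (-x)) := by
  have h : (gaussianReal 0 1).map (fun y => -y) = gaussianReal 0 1 := by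
    simpa using gaussianReal_map_neg (μ := 0) (v := 1)
  rw [← h, map_measureReal_apply measurable_neg measurableSet_Iic]
  congr 1
  ext y
  simp

theorem tendsto_gaussianReal_real_Iic_neg :
    Tendsto (fun x => (gaussianReal 0 1).real (Iic (-x))) atTop (𝓝 0) := by
  simpa only [Function.comp_def, cdf_eq_real] using
    (tendsto_cdf_atBot (gaussianReal 0 1)).comp tendsto_neg_atTop_atBot

theorem tendsto_gaussianReal_real_Ici :
    Tendsto (fun x => (gaussianReal 0 1).real (Ici x)) atTop (𝓝 0) := by
  simpa only [gaussianReal_real_Ici_eq] using tendsto_gaussianReal_real_Iic_neg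

open Real in
theorem tendsto_exp_half_sq_mul_gaussianReal_Ici {b : ℝ} (hb0 : 0 ≤ b) (hb1 : b < 1) :
    Tendsto (fun u => exp (u ^ 2 / 2) * (gaussianReal 0 1).real (Ici (b * u))) atTop atTop := by
  have hlin : Tendsto (fun u : ℝ => (√(2 * π))⁻¹ * exp ((1 - b) * u - 1)) atTop atTop :=
    (tendsto_exp_atTop.comp (tendsto_atTop_add_const_right _ _
      (tendsto_id.const_mul_atTop (by linarith)))).const_mul_atTop (by positivity)
  refine tendsto_atTop_mono' _ ?_ hlin
  filter_upwards [eventually_ge_atTop (1 / (1 - b))] with u hu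
  rw [div_le_iff₀ (by linarith)] at hu
  have hu1 : 1 ≤ u := by nlinarith
  calc (√(2 * π))⁻¹ * exp ((1 - b) * u - 1)
      ≤ (√(2 * π))⁻¹ * exp (u ^ 2 / 2 - (b * u + 1) ^ 2 / 2) := by
        gcongr (√(2 * π))⁻¹ * exp ?_
        -- `u² - (bu + 1)² = ((1 - b)u - 1)((1 + b)u + 1)` and `(1 + b)u ≥ 1`
        nlinarith [mul_nonneg (sub_nonneg.mpr hu) (by nlinarith : (0 : ℝ) ≤ (1 + b) * u - 1)]
    _ = exp (u ^ 2 / 2) * ((√(2 * π))⁻¹ * exp (-(b * u + 1) ^ 2 / 2)) := by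
        rw [exp_sub, neg_div, exp_neg]; ring
    _ ≤ exp (u ^ 2 / 2) * (gaussianReal 0 1).real (Ici (b * u)) := by
        gcongr; exact gaussianReal_real_Ici_ge (by positivity)

open Real in
theorem tendsto_sub_one_mul_gaussianReal_Ici_sqrt_log {b : ℝ} (hb0 : 0 ≤ b) (hb1 : b < 1) :
    Tendsto (fun x => (x - 1) * (gaussianReal 0 1).real (Ici (b * √(2 * log x)))) atTop atTop := by
  have hu : Tendsto (fun x => √(2 * log x)) atTop atTop :=
    tendsto_sqrt_atTop.comp (tendsto_log_atTop.const_mul_atTop two_pos)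
  refine tendsto_atTop_mono' _ ?_
    (((tendsto_exp_half_sq_mul_gaussianReal_Ici hb0 hb1).comp hu).const_mul_atTop one_half_pos)
  filter_upwards [eventually_ge_atTop 2] with x hx
  have hexp : exp (√(2 * log x) ^ 2 / 2) = x := by
    rw [sq_sqrt (by linarith [log_nonneg (by linarith : (1 : ℝ) ≤ x)]),
      mul_div_cancel_left₀ _ two_ne_zero, exp_log (by linarith)]
  rw [Function.comp_apply, hexp]
  nlinarith [measureReal_nonneg (μ := gaussianReal 0 1) (s := Ici (b * √(2 * log x)))]

instance (n : ℕ) : IsProbabilityMeasure (noise n) := by unfold noise; infer_instance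

section Noise

variable {n : ℕ} (T : Finset (Fin n)) {A : Set ℝ}

theorem card_filter_mem_eq_sum_indicator [DecidablePred (· ∈ A)] (e : Fin n → ℝ) :
    (#{i ∈ T | e i ∈ A} : ℝ) = ∑ i ∈ T, A.indicator 1 (e i) := by
  rw [Finset.natCast_card_filter]
  simp only [indicator_apply, Pi.one_apply]

theorem measurable_card_filter_mem [DecidablePred (· ∈ A)] (hA : MeasurableSet A) :
    Measurable fun e : Fin n → ℝ => (#{i ∈ T | e i ∈ A} : ℝ) := by
  simp only [card_filter_mem_eq_sum_indicator]
  exact Finset.measurable_sum T fun i _ =>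
    (measurable_one.indicator hA).comp (measurable_pi_apply i)

theorem integral_noise_indicator_eval (hA : MeasurableSet A) (i : Fin n) :
    ∫ e, A.indicator 1 (e i) ∂noise n = (gaussianReal 0 1).real A := by
  rw [noise, integral_comp_eval (measurable_one.indicator hA).aestronglyMeasurable,
    integral_indicator_one hA]

theorem integrable_noise_indicator_eval (hA : MeasurableSet A) (i : Fin n) :
    Integrable (fun e => A.indicator (1 : ℝ → ℝ) (e i)) (noise n) :=
  .of_bound ((measurable_one.indicator hA).comp (measurable_pi_apply i)).aestronglyMeasurable 1
    (ae_of_all _ fun e => by by_cases h : e i ∈ A <;> simp [h])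

theorem integrable_noise_card_filter_mem [DecidablePred (· ∈ A)] (hA : MeasurableSet A) :
    Integrable (fun e : Fin n → ℝ => (#{i ∈ T | e i ∈ A} : ℝ)) (noise n) := by
  simp only [card_filter_mem_eq_sum_indicator]
  exact integrable_finsetSum T fun i _ => integrable_noise_indicator_eval hA i

theorem integral_noise_card_filter_mem [DecidablePred (· ∈ A)] (hA : MeasurableSet A) :
    ∫ e, (#{i ∈ T | e i ∈ A} : ℝ) ∂noise n = #T * (gaussianReal 0 1).real A := by
  simp only [card_filter_mem_eq_sum_indicator]
  rw [integral_finsetSum T fun i _ => integrable_noise_indicator_eval hA i]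
  simp [integral_noise_indicator_eval hA]

theorem noise_real_card_filter_mem_lt_half_le [DecidablePred (· ∈ A)] (hA : MeasurableSet A) :
    (noise n).real {e | (#{i ∈ T | e i ∈ A} : ℝ) < #T * (gaussianReal 0 1).real A / 2}
      ≤ 4 / (#T * (gaussianReal 0 1).real A) := by
  have hind : Measurable (A.indicator (1 : ℝ → ℝ)) := measurable_one.indicator hA
  simp only [card_filter_mem_eq_sum_indicator]
  refine measureReal_sum_lt_half_mean_le (fun i _ => hind.comp (measurable_pi_apply i))
    (fun i _ e => ?_) (fun i _ => integral_noise_indicator_eval hA i) ?_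
  · by_cases h : e i ∈ A <;> simp [h]
  · exact fun i _ j _ hij =>
      (iIndepFun_pi (X := fun _ => A.indicator 1) fun _ => hind.aemeasurable).indepFun hij

end Noise

section Proportions

variable {n : ℕ} {θ : Fin n → ℝ} {φ : (Fin n → ℝ) → Fin n → Prop} {x : Fin n → ℝ}

theorem FDP_nonneg : 0 ≤ FDP n θ φ x := by
  unfold FDP; positivity

theorem FNP_nonneg : 0 ≤ FNP n θ φ x := by
  unfold FNP; positivity

theorem FDP_le_one : FDP n θ φ x ≤ 1 := by
  refine div_le_one_of_le₀ ((Finset.sum_le_sum fun i _ => ?_).trans (le_max_right _ _))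
    (zero_le_one.trans (le_max_left _ _))
  by_cases h : φ x i <;> by_cases h' : θ i = 0 <;> simp [h, h']

theorem FNP_le_one : FNP n θ φ x ≤ 1 := by
  refine div_le_one_of_le₀ ((Finset.sum_le_sum fun i _ => ?_).trans (le_max_right _ _))
    (zero_le_one.trans (le_max_left _ _))
  by_cases h : θ i = 0 <;> by_cases h' : φ x i <;> simp [h, h']

theorem div_add_card_support_le_FDP {c : ℝ} (hc : 0 ≤ c) (hθ : 1 ≤ #{i | θ i ≠ 0})
    (hV : c ≤ #{i | θ i = 0 ∧ φ x i}) : c / (c + #{i | θ i ≠ 0}) ≤ FDP n θ φ x := by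
  set F : Finset (Fin n) := {i | θ i = 0 ∧ φ x i}
  set N : Finset (Fin n) := {i | θ i ≠ 0}
  set R : Finset (Fin n) := {i | φ x i}
  have hN : (1 : ℝ) ≤ #N := by exact_mod_cast hθ
  have hR : (#R : ℝ) ≤ #F + #N := by
    have : R ⊆ F ∪ N := by
      intro i; simp only [F, N, R, Finset.mem_filter, Finset.mem_union]; tauto
    exact_mod_cast (Finset.card_le_card this).trans (Finset.card_union_le _ _)
  calc c / (c + #N) ≤ #F / (#F + #N) := by
        rw [div_le_div_iff₀ (by positivity) (by positivity)]; nlinarith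
    _ ≤ #F / max 1 (#R : ℝ) :=
        div_le_div_of_nonneg_left (by positivity) (by positivity) (max_le (by linarith) hR)
    _ = FDP n θ φ x := by simp [FDP, F, R]

theorem card_div_le_FNP {G : Finset (Fin n)} (hG : ∀ i ∈ G, θ i ≠ 0 ∧ ¬ φ x i) :
    #G / max 1 (#{i | θ i ≠ 0} : ℝ) ≤ FNP n θ φ x := by
  simp only [FNP, Finset.sum_boole]
  gcongr
  exact fun i hi => Finset.mem_filter.mpr ⟨Finset.mem_univ i, hG i hi⟩

theorem measurable_FDP (hφ : ∀ i, MeasurableSet {x | φ x i}) : Measurable (FDP n θ φ) := by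
  unfold FDP
  refine .div (Finset.measurable_sum _ fun i _ => ?_)
    (measurable_const.max (Finset.measurable_sum _ fun i _ => ?_))
  · exact Measurable.ite ((MeasurableSet.const _).inter (hφ i)) measurable_const measurable_const
  · exact Measurable.ite (hφ i) measurable_const measurable_const

theorem measurable_FNP (hφ : ∀ i, MeasurableSet {x | φ x i}) : Measurable (FNP n θ φ) := by
  unfold FNP
  refine .div_const (Finset.measurable_sum _ fun i _ => ?_) _
  exact Measurable.ite ((MeasurableSet.const _).inter (hφ i).compl) measurable_const
    measurable_const

theorem norm_FDP_le_one : ‖FDP n θ φ x‖ ≤ 1 := by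
  rw [Real.norm_eq_abs, abs_of_nonneg FDP_nonneg]; exact FDP_le_one

theorem norm_FNP_le_one : ‖FNP n θ φ x‖ ≤ 1 := by
  rw [Real.norm_eq_abs, abs_of_nonneg FNP_nonneg]; exact FNP_le_one

theorem FDR_nonneg : 0 ≤ FDR n θ φ := integral_nonneg fun _ => FDP_nonneg

theorem FNR_nonneg : 0 ≤ FNR n θ φ := integral_nonneg fun _ => FNP_nonneg

theorem FDR_le_one : FDR n θ φ ≤ 1 :=
  integral_le_one_of_norm_le_one fun _ => norm_FDP_le_one

theorem FNR_le_one : FNR n θ φ ≤ 1 :=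
  integral_le_one_of_norm_le_one fun _ => norm_FNP_le_one

theorem integrable_FDP (hφ : ∀ i, MeasurableSet {x | φ x i}) :
    Integrable (fun e => FDP n θ φ (fun i => θ i + e i)) (noise n) :=
  .of_bound ((measurable_FDP hφ).comp (by fun_prop)).aestronglyMeasurable 1
    (ae_of_all _ fun _ => norm_FDP_le_one)

theorem integrable_FNP (hφ : ∀ i, MeasurableSet {x | φ x i}) :
    Integrable (fun e => FNP n θ φ (fun i => θ i + e i)) (noise n) :=
  .of_bound ((measurable_FNP hφ).comp (by fun_prop)).aestronglyMeasurable 1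
    (ae_of_all _ fun _ => norm_FNP_le_one)

end Proportions

theorem IsThresholding.measurableSet {n : ℕ} {φ : (Fin n → ℝ) → Fin n → Prop}
    (hφ : IsThresholding n φ) (i : Fin n) : MeasurableSet {x | φ x i} := by
  obtain ⟨τ₁, τ₂, hτ₁, hτ₂, -, hφ⟩ := hφ
  simp_rw [hφ]
  exact (measurableSet_le hτ₁ (measurable_pi_apply i)).union
    (measurableSet_le hτ₂ (measurable_pi_apply i).neg)

def spikeSignal {n : ℕ} (S : Finset (Fin n)) (μ : ℝ) : Fin n → ℝ :=
  fun i => if i ∈ S then μ else 0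

section Spike

variable {n : ℕ} {φ : (Fin n → ℝ) → Fin n → Prop} {τ₁ τ₂ : (Fin n → ℝ) → ℝ}
  {S : Finset (Fin n)} {μ t : ℝ}

theorem filter_spikeSignal_ne_zero (hμ : μ ≠ 0) :
    ({i | spikeSignal S μ i ≠ 0} : Finset (Fin n)) = S := by
  ext i; by_cases hi : i ∈ S <;> simp [spikeSignal, hi, hμ]

theorem spikeSignal_mem_calL0 {s : ℕ} (hS : #S = s) {a : ℝ} (hμ : 0 < μ)
    (ha : a * √(2 * Real.log (n / s)) ≤ μ) : spikeSignal S μ ∈ calL0 n s a := by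
  refine ⟨by rw [filter_spikeSignal_ne_zero hμ.ne', hS], fun i hi => ?_⟩
  by_cases h : i ∈ S <;> simp_all [spikeSignal, abs_of_pos hμ]

theorem div_add_card_le_FDP_spikeSignal (hφ : ∀ x i, φ x i ↔ τ₁ x ≤ x i ∨ τ₂ x ≤ -x i)
    (hS : S.Nonempty) (hμ : μ ≠ 0) {c : ℝ} (hc : 0 ≤ c) {e : Fin n → ℝ}
    (hτ : τ₁ (fun i => spikeSignal S μ i + e i) ≤ t) (hN : c ≤ #{i ∈ Sᶜ | e i ∈ Ici t}) :
    c / (c + #S) ≤ FDP n (spikeSignal S μ) φ (fun i => spikeSignal S μ i + e i) := by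
  have hfalse : {i ∈ Sᶜ | e i ∈ Ici t} ⊆
      ({i | spikeSignal S μ i = 0 ∧ φ (fun i => spikeSignal S μ i + e i) i} : Finset (Fin n)) := by
    intro i hi
    obtain ⟨hiS, hti⟩ := Finset.mem_filter.mp hi
    have h0 : spikeSignal S μ i = 0 := if_neg (Finset.mem_compl.mp hiS)
    refine Finset.mem_filter.mpr ⟨Finset.mem_univ i, h0, (hφ _ i).mpr (Or.inl ?_)⟩
    rw [h0, zero_add]
    exact hτ.trans hti
  have hsupp := filter_spikeSignal_ne_zero (S := S) hμ
  have h := div_add_card_support_le_FDP (φ := φ) (x := fun i => spikeSignal S μ i + e i) hc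
    (by rw [hsupp]; exact hS.card_pos) (hN.trans (by exact_mod_cast Finset.card_le_card hfalse))
  rwa [hsupp] at h

theorem one_sub_card_div_le_FNP_spikeSignal (hφ : ∀ x i, φ x i ↔ τ₁ x ≤ x i ∨ τ₂ x ≤ -x i)
    (hτ₂ : ∀ x, 0 ≤ τ₂ x) (hS : S.Nonempty) (hμ : 0 < μ) {e : Fin n → ℝ}
    (hτ : t < τ₁ (fun i => spikeSignal S μ i + e i)) :
    1 - (#{i ∈ S | e i ∈ Iic (-μ) ∪ Ici (t - μ)} : ℝ) / #S
      ≤ FNP n (spikeSignal S μ) φ (fun i => spikeSignal S μ i + e i) := by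
  have hmissed : ∀ i ∈ {i ∈ S | e i ∉ Iic (-μ) ∪ Ici (t - μ)}, spikeSignal S μ i ≠ 0 ∧
      ¬ φ (fun i => spikeSignal S μ i + e i) i := by
    intro i hi
    obtain ⟨hiS, hei⟩ := Finset.mem_filter.mp hi
    simp only [mem_union, mem_Iic, mem_Ici, not_or, not_le] at hei
    have hθ : spikeSignal S μ i = μ := if_pos hiS
    refine ⟨by rw [hθ]; exact hμ.ne', fun hrej => ?_⟩
    rcases (hφ _ i).mp hrej with h | h <;> simp only [hθ] at h
    · linarith
    · linarith [hτ₂ (fun i => spikeSignal S μ i + e i)]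
  have hcard := Finset.card_filter_add_card_filter_not
    (s := S) (fun i => e i ∈ Iic (-μ) ∪ Ici (t - μ))
  have hSpos : (0 : ℝ) < #S := by exact_mod_cast hS.card_pos
  refine le_trans (le_of_eq ?_) (card_div_le_FNP hmissed)
  rw [filter_spikeSignal_ne_zero hμ.ne', max_eq_right (by exact_mod_cast hS.card_pos),
    eq_div_iff hSpos.ne', sub_mul, div_mul_cancel₀ _ hSpos.ne', ← hcard]
  push_cast
  ring

theorem FDP_add_FNP_spikeSignal_ge (hφ : ∀ x i, φ x i ↔ τ₁ x ≤ x i ∨ τ₂ x ≤ -x i)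
    (hτ₂ : ∀ x, 0 ≤ τ₂ x) (hS : S.Nonempty) (hμ : 0 < μ) {c : ℝ} (hc : 0 ≤ c) (e : Fin n → ℝ) :
    c / (c + #S) - {e : Fin n → ℝ | (#{i ∈ Sᶜ | e i ∈ Ici t} : ℝ) < c}.indicator 1 e
        - (#{i ∈ S | e i ∈ Iic (-μ) ∪ Ici (t - μ)} : ℝ) / #S
      ≤ FDP n (spikeSignal S μ) φ (fun i => spikeSignal S μ i + e i)
        + FNP n (spikeSignal S μ) φ (fun i => spikeSignal S μ i + e i) := by
  have hfrac : c / (c + #S) ≤ 1 := div_le_one_of_le₀ (by simp) (by positivity)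
  have hbad : 0 ≤ (#{i ∈ S | e i ∈ Iic (-μ) ∪ Ici (t - μ)} : ℝ) / #S := by positivity
  have hFDP : 0 ≤ FDP n (spikeSignal S μ) φ (fun i => spikeSignal S μ i + e i) := FDP_nonneg
  have hFNP : 0 ≤ FNP n (spikeSignal S μ) φ (fun i => spikeSignal S μ i + e i) := FNP_nonneg
  simp only [indicator_apply, mem_ofPred_eq, Pi.one_apply]
  rcases le_or_gt (τ₁ fun i => spikeSignal S μ i + e i) t with hτ | hτ
  · split_ifs with hN
    · linarith
    · linarith [div_add_card_le_FDP_spikeSignal hφ hS hμ.ne' hc hτ (not_lt.mp hN)]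
  · split_ifs <;> linarith [one_sub_card_div_le_FNP_spikeSignal hφ hτ₂ hS hμ hτ]

theorem FDR_add_FNR_spikeSignal_ge (hφ : IsThresholding n φ) (hS : S.Nonempty) (hμ : 0 < μ)
    {c : ℝ} (hc : 0 ≤ c) :
    c / (c + #S) - (noise n).real {e | (#{i ∈ Sᶜ | e i ∈ Ici t} : ℝ) < c}
        - ((gaussianReal 0 1).real (Iic (-μ)) + (gaussianReal 0 1).real (Ici (t - μ)))
      ≤ FDR n (spikeSignal S μ) φ + FNR n (spikeSignal S μ) φ := by
  have hmeas := hφ.measurableSet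
  obtain ⟨τ₁, τ₂, -, -, hτ, hφ⟩ := hφ
  have hbad : MeasurableSet (Iic (-μ) ∪ Ici (t - μ)) := measurableSet_Iic.union measurableSet_Ici
  have hexc : MeasurableSet {e : Fin n → ℝ | (#{i ∈ Sᶜ | e i ∈ Ici t} : ℝ) < c} :=
    measurableSet_lt (measurable_card_filter_mem _ measurableSet_Ici) measurable_const
  have hSpos : (0 : ℝ) < #S := by exact_mod_cast hS.card_pos
  have hint_bad := (integrable_noise_card_filter_mem S hbad).div_const (#S : ℝ)
  have hint_exc : Integrable ({e : Fin n → ℝ | (#{i ∈ Sᶜ | e i ∈ Ici t} : ℝ) < c}.indicator 1)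
      (noise n) := (integrable_const (1 : ℝ)).indicator hexc
  have hint_main : Integrable (fun e => c / (c + #S)
      - {e : Fin n → ℝ | (#{i ∈ Sᶜ | e i ∈ Ici t} : ℝ) < c}.indicator 1 e) (noise n) :=
    (integrable_const _).sub hint_exc
  have hlower := integral_mono (hint_main.sub hint_bad)
    ((integrable_FDP hmeas).add (integrable_FNP hmeas))
    (FDP_add_FNP_spikeSignal_ge hφ (fun x => (hτ x).2) hS hμ hc)
  simp only [Pi.sub_apply, Pi.add_apply] at hlower
  rw [integral_sub hint_main hint_bad,
    integral_sub (integrable_const _) hint_exc, integral_const,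
    integral_indicator_one hexc,
    integral_div, integral_noise_card_filter_mem S hbad, mul_div_cancel_left₀ _ hSpos.ne',
    integral_add (integrable_FDP hmeas) (integrable_FNP hmeas)] at hlower
  have hunion := measureReal_union_le (μ := gaussianReal 0 1) (Iic (-μ)) (Ici (t - μ))
  simp only [probReal_univ, smul_eq_mul, one_mul] at hlower
  exact le_trans (by linarith) hlower

end Spike

/-- For `m` nulls, `s` signals of size `μ` and a level `t`: the first term is the FDP once at least
half of the expected `m Φ̄(t)` nulls exceed `t`, the second is Chebyshev's bound on the opposite
event, and the last bounds the expected fraction of signals whose noise leaves `(-μ, t - μ)`. -/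
noncomputable def spikeRiskBound (m s μ t : ℝ) : ℝ :=
  m * (gaussianReal 0 1).real (Ici t) / 2 / (m * (gaussianReal 0 1).real (Ici t) / 2 + s)
    - 4 / (m * (gaussianReal 0 1).real (Ici t))
    - ((gaussianReal 0 1).real (Iic (-μ)) + (gaussianReal 0 1).real (Ici (t - μ)))

theorem spikeRiskBound_le_FDR_add_FNR {n : ℕ} {φ : (Fin n → ℝ) → Fin n → Prop}
    (hφ : IsThresholding n φ) {S : Finset (Fin n)} (hS : S.Nonempty) {μ : ℝ} (hμ : 0 < μ) (t : ℝ) :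
    spikeRiskBound #Sᶜ #S μ t ≤ FDR n (spikeSignal S μ) φ + FNR n (spikeSignal S μ) φ := by
  have hrisk := FDR_add_FNR_spikeSignal_ge (t := t) hφ hS hμ
    (c := #Sᶜ * (gaussianReal 0 1).real (Ici t) / 2) (by positivity)
  have hcheb := noise_real_card_filter_mem_lt_half_le Sᶜ (measurableSet_Ici (a := t))
  unfold spikeRiskBound
  linarith

theorem tendsto_spikeRiskBound {m s μ t : ℕ → ℝ} (hs : ∀ᶠ n in atTop, 1 ≤ s n)
    (hm : Tendsto (fun n => m n * (gaussianReal 0 1).real (Ici (t n)) / s n) atTop atTop)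
    (hμ : Tendsto μ atTop atTop) (htμ : Tendsto (fun n => t n - μ n) atTop atTop) :
    Tendsto (fun n => spikeRiskBound (m n) (s n) (μ n) (t n)) atTop (𝓝 1) := by
  have hc : Tendsto (fun n => m n * (gaussianReal 0 1).real (Ici (t n))) atTop atTop := by
    refine tendsto_atTop_mono' _ ?_ hm
    filter_upwards [hs, hm.eventually_ge_atTop 0] with n hsn hr
    calc _ ≤ m n * (gaussianReal 0 1).real (Ici (t n)) / s n * s n := le_mul_of_one_le_right hr hsn
      _ = _ := div_mul_cancel₀ _ (by linarith)
  have hfrac : Tendsto (fun n => m n * (gaussianReal 0 1).real (Ici (t n)) / 2 /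
      (m n * (gaussianReal 0 1).real (Ici (t n)) / 2 + s n)) atTop (𝓝 1) := by
    have h := (tendsto_inv_atTop_zero.comp
      (tendsto_atTop_add_const_right _ 1 (hm.atTop_div_const two_pos))).const_sub 1
    rw [sub_zero] at h
    refine h.congr' ?_
    filter_upwards [hs, hc.eventually_ge_atTop 0] with n hsn hcn
    have hs0 : s n ≠ 0 := by positivity
    have hcs : m n * (gaussianReal 0 1).real (Ici (t n)) / 2 + s n ≠ 0 := by positivity
    rw [Function.comp_apply, show m n * (gaussianReal 0 1).real (Ici (t n)) / s n / 2 + 1 =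
      (m n * (gaussianReal 0 1).real (Ici (t n)) / 2 + s n) / s n by field_simp,
      inv_div, one_sub_div hcs, add_sub_cancel_right]
  simpa only [spikeRiskBound, Function.comp_def, sub_zero, add_zero] using
    (hfrac.sub (tendsto_const_nhds.div_atTop hc)).sub
      ((tendsto_gaussianReal_real_Iic_neg.comp hμ).add (tendsto_gaussianReal_real_Ici.comp htμ))

theorem tendsto_spikeRiskBound_sqrt_log {s : ℕ → ℕ} (hs : ∀ᶠ n in atTop, 1 ≤ s n)
    (hρ : Tendsto (fun n : ℕ => (n : ℝ) / s n) atTop atTop) {b : ℝ} (hb0 : 0 < b) (hb1 : b < 1) :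
    Tendsto (fun n : ℕ => spikeRiskBound (n - s n) (s n) (b * √(2 * Real.log (n / s n)))
      ((b + 1) / 2 * √(2 * Real.log (n / s n)))) atTop (𝓝 1) := by
  have hu : Tendsto (fun n : ℕ => √(2 * Real.log (n / s n))) atTop atTop :=
    Real.tendsto_sqrt_atTop.comp ((Real.tendsto_log_atTop.comp hρ).const_mul_atTop two_pos)
  refine tendsto_spikeRiskBound (hs.mono fun n h => by exact_mod_cast h) ?_
    (hu.const_mul_atTop hb0) ?_
  · refine ((tendsto_sub_one_mul_gaussianReal_Ici_sqrt_log (b := (b + 1) / 2) (by linarith)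
      (by linarith)).comp hρ).congr' ?_
    filter_upwards [hs] with n hsn
    have hs0 : (s n : ℝ) ≠ 0 := by positivity
    simp only [Function.comp_apply]
    field_simp
  · exact (hu.const_mul_atTop (by linarith : 0 < (1 - b) / 2)).congr fun n => by ring

theorem tendsto_natCast_div_of_le_rpow {υ : ℝ} (hυ : υ < 1) {s : ℕ → ℕ}
    (hs : ∀ᶠ n in atTop, 1 ≤ s n) (hs2 : ∀ n : ℕ, (s n : ℝ) ≤ (n : ℝ) ^ υ) :
    Tendsto (fun n : ℕ => (n : ℝ) / s n) atTop atTop := by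
  refine tendsto_atTop_mono' _ ?_
    ((tendsto_rpow_atTop (sub_pos.mpr hυ)).comp tendsto_natCast_atTop_atTop)
  filter_upwards [hs, eventually_ge_atTop 1] with n hsn hn
  have hn0 : (0 : ℝ) < n := by exact_mod_cast hn
  rw [Function.comp_apply, Real.rpow_sub hn0, Real.rpow_one]
  exact div_le_div_of_nonneg_left hn0.le (by exact_mod_cast hsn) (hs2 n)

theorem isThresholding_zero (n : ℕ) : IsThresholding n fun x i => 0 ≤ x i ∨ 0 ≤ -x i :=
  ⟨0, 0, measurable_const, measurable_const, fun _ => ⟨le_rfl, le_rfl⟩, fun _ _ => Iff.rfl⟩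

noncomputable def worstCaseRisk (n s : ℕ) (a : ℝ) (φ : (Fin n → ℝ) → Fin n → Prop) : ℝ :=
  sSup ((fun θ₀ => FDR n θ₀ φ + FNR n θ₀ φ) '' calL0 n s a)

noncomputable def thresholdingMinimaxRisk (n s : ℕ) (a : ℝ) : ℝ :=
  sInf (worstCaseRisk n s a '' {φ | IsThresholding n φ})

section Minimax

variable {n s : ℕ} {a : ℝ} {φ : (Fin n → ℝ) → Fin n → Prop}

theorem bddAbove_risk_image :
    BddAbove ((fun θ₀ => FDR n θ₀ φ + FNR n θ₀ φ) '' calL0 n s a) := by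
  refine ⟨2, ?_⟩
  rintro _ ⟨θ, -, rfl⟩
  linarith [@FDR_le_one n θ φ, @FNR_le_one n θ φ]

theorem worstCaseRisk_nonneg : 0 ≤ worstCaseRisk n s a φ :=
  Real.sSup_nonneg (by rintro _ ⟨θ, -, rfl⟩; exact add_nonneg FDR_nonneg FNR_nonneg)

theorem worstCaseRisk_le_two : worstCaseRisk n s a φ ≤ 2 :=
  Real.sSup_le (by rintro _ ⟨θ, -, rfl⟩; linarith [@FDR_le_one n θ φ, @FNR_le_one n θ φ])
    zero_le_two

theorem thresholdingMinimaxRisk_le_two : thresholdingMinimaxRisk n s a ≤ 2 :=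
  (csInf_le ⟨0, by rintro _ ⟨φ, -, rfl⟩; exact worstCaseRisk_nonneg⟩
    (mem_image_of_mem (worstCaseRisk n s a) (isThresholding_zero n))).trans worstCaseRisk_le_two

theorem le_thresholdingMinimaxRisk {r : ℝ}
    (h : ∀ φ, IsThresholding n φ → ∃ θ ∈ calL0 n s a, r ≤ FDR n θ φ + FNR n θ φ) :
    r ≤ thresholdingMinimaxRisk n s a := by
  refine le_csInf ⟨_, mem_image_of_mem _ (isThresholding_zero n)⟩ ?_
  rintro _ ⟨φ, hφ, rfl⟩
  obtain ⟨θ, hθ, hr⟩ := h φ hφ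
  exact hr.trans (le_csSup bddAbove_risk_image ⟨θ, hθ, rfl⟩)

end Minimax

theorem spikeRiskBound_le_thresholdingMinimaxRisk {n s : ℕ} {a b : ℝ} (hab : a ≤ b) (hb : 0 < b)
    (hs : 1 ≤ s) (hsn : 1 < (n : ℝ) / s) (t : ℝ) :
    spikeRiskBound (n - s) s (b * √(2 * Real.log (n / s))) t ≤ thresholdingMinimaxRisk n s a := by
  have hsn' : s ≤ n := by
    have := (one_lt_div (by positivity)).mp hsn
    exact_mod_cast this.le
  obtain ⟨S, -, hS⟩ := Finset.exists_subset_card_eq (s := (Finset.univ : Finset (Fin n)))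
    (by simpa using hsn')
  have hμ : 0 < b * √(2 * Real.log (n / s)) :=
    mul_pos hb (Real.sqrt_pos.mpr (mul_pos two_pos (Real.log_pos hsn)))
  refine le_thresholdingMinimaxRisk fun φ hφ =>
    ⟨_, spikeSignal_mem_calL0 hS hμ (by gcongr), ?_⟩
  have := spikeRiskBound_le_FDR_add_FNR hφ (Finset.card_pos.mp (hS ▸ hs)) hμ t
  rwa [Finset.card_compl, hS, Fintype.card_fin, Nat.cast_sub hsn'] at this

/-- **Proposition 2 (lower bound on the classification risk below the boundary).**
For `a < 1`, `s_n → ∞` with `s_n ≤ n^υ`, `υ ∈ (0,1)`, and the class `C` of two-sided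
thresholding-based procedures,
`liminf_n inf_{φ ∈ C} sup_{θ₀ ∈ L₀[s_n;a]} (FDR(θ₀,φ) + FNR(θ₀,φ)) ≥ 1`. -/
theorem classification_lower_bound
    (a υ : ℝ) (ha : a < 1) (hυ : υ ∈ Set.Ioo (0 : ℝ) 1)
    (s : ℕ → ℕ) (hs1 : Filter.Tendsto s Filter.atTop Filter.atTop)
    (hs2 : ∀ n : ℕ, (s n : ℝ) ≤ (n : ℝ) ^ υ) :
    1 ≤ Filter.liminf (fun n : ℕ =>
        sInf ((fun φ : (Fin n → ℝ) → Fin n → Prop =>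
            sSup ((fun θ₀ => FDR n θ₀ φ + FNR n θ₀ φ) '' calL0 n (s n) a)) ''
          {φ | IsThresholding n φ})) Filter.atTop := by
  change 1 ≤ liminf (fun n => thresholdingMinimaxRisk n (s n) a) atTop
  set b := max a (1 / 2)
  have hb0 : 0 < b := lt_max_of_lt_right one_half_pos
  have hs : ∀ᶠ n in atTop, 1 ≤ s n := hs1.eventually_ge_atTop 1
  have hρ := tendsto_natCast_div_of_le_rpow hυ.2 hs hs2
  have hR := tendsto_spikeRiskBound_sqrt_log hs hρ hb0 (max_lt ha one_half_lt_one)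
  refine hR.liminf_eq.symm.le.trans (liminf_le_liminf ?_ hR.isBoundedUnder_ge
    (isCoboundedUnder_ge_of_le _ fun _ => thresholdingMinimaxRisk_le_two))
  filter_upwards [hs, hρ.eventually_gt_atTop 1] with n hsn hρn
  exact spikeRiskBound_le_thresholdingMinimaxRisk (le_max_left _ _) hb0 hsn hρn _
end

section
/- Let m ≥ 1, p₁,…,p_m ∈ (0,1), and let U = Σ_{i=1}^m B_i where B_i are independent Bernoulli(p_i) random variables. Let T be any nonnegative random variable independent of U. Then E[(T/(T+U))·1{T>0}] ≤ e^{−E[U]} + 12·E[T]/E[U]. -/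
/-!
Bound the integrand pointwise by `1{U = 0} + T * U⁻¹`. By independence the second term has
expectation `E[T] E[U⁻¹]`. The first is `P(U = 0) = ∏ (1 - pᵢ) ≤ e^{-E[U]}`. Since `U` is
either `0` or at least `1`, `U⁻¹ ≤ 2 / E[U]` unless `U` deviates from its mean by `E[U] / 2`,
which by Chebyshev has probability at most `4 Var[U] / E[U]² ≤ 4 / E[U]`, because a sum of
independent Bernoulli variables has variance at most its mean.
-/

open MeasureTheory ProbabilityTheory Filter Set
open scoped Classical ENNReal

section ZeroOne

variable {Ω : Type*} [MeasurableSpace Ω] {μ : Measure Ω} {X : Ω → ℝ}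

lemma integral_eq_measureReal_eq_one (hX : ∀ ω, X ω = 0 ∨ X ω = 1) (hXm : Measurable X) :
    μ[X] = μ.real {ω | X ω = 1} := by
  have hX_eq : X = {ω | X ω = 1}.indicator 1 := by
    ext ω
    rcases hX ω with h | h <;> simp [Set.indicator, h]
  conv_lhs => rw [hX_eq]
  exact integral_indicator_one (hXm (measurableSet_singleton 1))

lemma memLp_of_eq_zero_or_one [IsFiniteMeasure μ] (hX : ∀ ω, X ω = 0 ∨ X ω = 1)
    (hXm : Measurable X) (q : ℝ≥0∞) : MemLp X q μ :=
  .of_bound hXm.aestronglyMeasurable 1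
    (ae_of_all _ fun ω => by rcases hX ω with h | h <;> simp [h])

lemma variance_le_integral_of_eq_zero_or_one [IsProbabilityMeasure μ]
    (hX : ∀ ω, X ω = 0 ∨ X ω = 1) (hXm : Measurable X) : variance X μ ≤ μ[X] := by
  have hsq : X ^ 2 = X := by
    ext ω
    rcases hX ω with h | h <;> simp [h]
  rw [variance_eq_sub (memLp_of_eq_zero_or_one hX hXm 2), hsq]
  nlinarith [sq_nonneg μ[X]]

lemma measureReal_eq_zero_le_exp_neg_integral [IsProbabilityMeasure μ]
    (hX : ∀ ω, X ω = 0 ∨ X ω = 1) (hXm : Measurable X) :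
    μ.real {ω | X ω = 0} ≤ Real.exp (-μ[X]) := by
  have hcompl : {ω | X ω = 0} = {ω | X ω = 1}ᶜ := by
    ext ω
    rcases hX ω with h | h <;> simp [h]
  have hone : MeasurableSet {ω | X ω = 1} := hXm (measurableSet_singleton 1)
  rw [hcompl, probReal_compl_eq_one_sub hone, ← integral_eq_measureReal_eq_one hX hXm]
  exact Real.one_sub_le_exp_neg _

end ZeroOne

section BernoulliSum

variable {Ω ι : Type*} [Fintype ι] {B : ι → Ω → ℝ}

lemma sum_eq_zero_or_one_le (hB : ∀ i ω, B i ω = 0 ∨ B i ω = 1) (ω : Ω) :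
    ∑ i, B i ω = 0 ∨ 1 ≤ ∑ i, B i ω := by
  by_cases hzero : ∀ i, B i ω = 0
  · exact .inl (Finset.sum_eq_zero fun i _ => hzero i)
  · push Not at hzero
    obtain ⟨j, hj⟩ := hzero
    refine .inr ?_
    calc (1 : ℝ) = B j ω := ((hB j ω).resolve_left hj).symm
      _ ≤ ∑ i, B i ω := Finset.single_le_sum
          (fun i _ => (hB i ω).elim ge_of_eq (fun h => h ▸ zero_le_one)) (Finset.mem_univ j)

variable [MeasurableSpace Ω] {μ : Measure Ω}

lemma integral_sum_eq_sum_measureReal [IsFiniteMeasure μ] (hB : ∀ i ω, B i ω = 0 ∨ B i ω = 1)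
    (hBm : ∀ i, Measurable (B i)) :
    μ[fun ω => ∑ i, B i ω] = ∑ i, μ.real {ω | B i ω = 1} := by
  rw [integral_finsetSum _ fun i _ => (memLp_of_eq_zero_or_one (hB i) (hBm i) 1).integrable le_rfl]
  exact Finset.sum_congr rfl fun i _ => integral_eq_measureReal_eq_one (hB i) (hBm i)

lemma variance_sum_le_integral_sum [IsProbabilityMeasure μ]
    (hB : ∀ i ω, B i ω = 0 ∨ B i ω = 1) (hBm : ∀ i, Measurable (B i))
    (hBindep : Pairwise fun i j => B i ⟂ᵢ[μ] B j) :
    variance (fun ω => ∑ i, B i ω) μ ≤ μ[fun ω => ∑ i, B i ω] := by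
  rw [← Finset.sum_fn, IndepFun.variance_sum (fun i _ => memLp_of_eq_zero_or_one (hB i) (hBm i) 2)
    (fun i _ j _ hij => hBindep hij), Finset.sum_fn, integral_sum_eq_sum_measureReal hB hBm]
  exact Finset.sum_le_sum fun i _ => (variance_le_integral_of_eq_zero_or_one (hB i) (hBm i)).trans
    (integral_eq_measureReal_eq_one (hB i) (hBm i)).le

lemma measureReal_sum_eq_zero_le_exp [IsProbabilityMeasure μ]
    (hB : ∀ i ω, B i ω = 0 ∨ B i ω = 1) (hBm : ∀ i, Measurable (B i)) (hBindep : iIndepFun B μ) :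
    μ.real {ω | ∑ i, B i ω = 0} ≤ Real.exp (-μ[fun ω => ∑ i, B i ω]) := by
  have hinter : {ω | ∑ i, B i ω = 0} = ⋂ i, {ω | B i ω = 0} := by
    ext ω
    simp [Finset.sum_eq_zero_iff_of_nonneg fun i _ =>
      (hB i ω).elim ge_of_eq (fun h => h ▸ zero_le_one)]
  rw [hinter, measureReal_def, hBindep.meas_iInter (s := fun i => {ω | B i ω = 0})
      fun i => ⟨{0}, measurableSet_singleton 0, rfl⟩,
    ENNReal.toReal_prod, integral_sum_eq_sum_measureReal hB hBm, ← Finset.sum_neg_distrib,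
    Real.exp_sum]
  exact Finset.prod_le_prod (fun i _ => ENNReal.toReal_nonneg) fun i _ =>
    (integral_eq_measureReal_eq_one (hB i) (hBm i)) ▸
      measureReal_eq_zero_le_exp_neg_integral (hB i) (hBm i)

end BernoulliSum

section InverseMoment

variable {Ω : Type*} [MeasurableSpace Ω] {μ : Measure Ω} {U : Ω → ℝ}

lemma inv_le_two_div_add_indicator {u s : ℝ} (hu : u = 0 ∨ 1 ≤ u) (hs : 0 < s) :
    u⁻¹ ≤ 2 / s + {x | s / 2 ≤ |x - s|}.indicator 1 u := by
  have hind : 0 ≤ {x | s / 2 ≤ |x - s|}.indicator (1 : ℝ → ℝ) u :=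
    Set.indicator_nonneg (fun _ _ => zero_le_one) u
  rcases hu with rfl | hu
  · rw [inv_zero]
    positivity
  have hu_pos : 0 < u := one_pos.trans_le hu
  by_cases hnear : s / 2 ≤ u
  · have : u⁻¹ ≤ 2 / s := by
      rw [inv_le_comm₀ hu_pos (by positivity), inv_div]
      exact hnear
    linarith
  · have hfar : u ∈ {x | s / 2 ≤ |x - s|} := by
      rw [Set.mem_ofPred_eq, abs_of_neg (by linarith)]
      linarith
    rw [Set.indicator_of_mem hfar, Pi.one_apply]
    linarith [inv_le_one_of_one_le₀ hu, div_pos two_pos hs]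

lemma integrable_inv_of_eq_zero_or_one_le [IsFiniteMeasure μ] (hU : ∀ ω, U ω = 0 ∨ 1 ≤ U ω)
    (hUm : Measurable U) : Integrable (fun ω => (U ω)⁻¹) μ :=
  .of_bound hUm.inv.aestronglyMeasurable 1 (ae_of_all _ fun ω => by
    rcases hU ω with h | h
    · simp [h]
    · rw [norm_inv, Real.norm_of_nonneg (zero_le_one.trans h)]
      exact inv_le_one_of_one_le₀ h)

lemma integral_inv_le [IsProbabilityMeasure μ] (hU : ∀ ω, U ω = 0 ∨ 1 ≤ U ω)
    (hUm : Measurable U) (hL2 : MemLp U 2 μ) (hpos : 0 < μ[U]) :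
    ∫ ω, (U ω)⁻¹ ∂μ ≤ 2 / μ[U] + 4 * variance U μ / μ[U] ^ 2 := by
  set s := μ[U]
  set far := {ω | s / 2 ≤ |U ω - s|}
  have hfar : MeasurableSet far :=
    measurableSet_le measurable_const ((hUm.sub measurable_const).abs)
  have hcheb : μ.real far ≤ 4 * variance U μ / s ^ 2 := by
    calc μ.real far ≤ variance U μ / (s / 2) ^ 2 :=
          ENNReal.toReal_le_of_le_ofReal (by have := variance_nonneg U μ; positivity)
            (meas_ge_le_variance_div_sq hL2 (half_pos hpos))
      _ = 4 * variance U μ / s ^ 2 := by field_simp; ring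
  calc ∫ ω, (U ω)⁻¹ ∂μ ≤ ∫ ω, (2 / s + far.indicator 1 ω) ∂μ := by
        refine integral_mono_of_nonneg
          (ae_of_all _ fun ω => inv_nonneg.mpr ((hU ω).elim ge_of_eq (zero_le_one.trans ·)))
          ((integrable_const _).add ((integrable_const 1).indicator hfar))
          (ae_of_all _ fun ω => inv_le_two_div_add_indicator (hU ω) hpos)
    _ = 2 / s + μ.real far := by
        rw [integral_add (integrable_const _) ((integrable_const 1).indicator hfar),
          integral_indicator_one hfar, integral_const, probReal_univ, one_smul]
    _ ≤ 2 / s + 4 * variance U μ / s ^ 2 := by linarith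

lemma integral_inv_sum_le [IsProbabilityMeasure μ] {ι : Type*} [Fintype ι] {B : ι → Ω → ℝ}
    (hB : ∀ i ω, B i ω = 0 ∨ B i ω = 1) (hBm : ∀ i, Measurable (B i))
    (hBindep : Pairwise fun i j => B i ⟂ᵢ[μ] B j) (hpos : 0 < μ[fun ω => ∑ i, B i ω]) :
    ∫ ω, (∑ i, B i ω)⁻¹ ∂μ ≤ 6 / μ[fun ω => ∑ i, B i ω] := by
  set s := μ[fun ω => ∑ i, B i ω]
  have hvar := variance_sum_le_integral_sum hB hBm hBindep
  calc ∫ ω, (∑ i, B i ω)⁻¹ ∂μ ≤ 2 / s + 4 * s / s ^ 2 :=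
        (integral_inv_le (sum_eq_zero_or_one_le hB) (Finset.measurable_sum _ fun i _ => hBm i)
          (memLp_finsetSum _ fun i _ => memLp_of_eq_zero_or_one (hB i) (hBm i) 2) hpos).trans
          (by gcongr)
    _ = 6 / s := by field_simp; ring

end InverseMoment

section Ratio

variable {Ω : Type*} [MeasurableSpace Ω] {μ : Measure Ω}

/-- At `u = 0` the junk value `u⁻¹ = 0` kills the last term, and the indicator takes over. -/
lemma ratio_le_indicator_add_mul_inv {t u : ℝ} (ht : 0 ≤ t) (hu : 0 ≤ u) :
    (if 0 < t then t / (t + u) else 0) ≤ ({0} : Set ℝ).indicator 1 u + t * u⁻¹ := by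
  have hind : 0 ≤ ({0} : Set ℝ).indicator (1 : ℝ → ℝ) u :=
    Set.indicator_nonneg (fun _ _ => zero_le_one) u
  split_ifs with htpos
  · rcases hu.eq_or_lt with rfl | hupos
    · simp [htpos.ne']
    · calc t / (t + u) ≤ t / u := div_le_div_of_nonneg_left ht hupos (by linarith)
        _ ≤ ({0} : Set ℝ).indicator 1 u + t * u⁻¹ := by
          rw [div_eq_mul_inv]
          linarith
  · nlinarith [inv_nonneg.mpr hu]

lemma integral_ratio_le [IsFiniteMeasure μ] {T U : Ω → ℝ} (hT0 : ∀ ω, 0 ≤ T ω)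
    (hT : Integrable T μ) (hU0 : ∀ ω, 0 ≤ U ω) (hUm : Measurable U)
    (hUinv : Integrable (fun ω => (U ω)⁻¹) μ) (hTU : T ⟂ᵢ[μ] U) :
    ∫ ω, (if 0 < T ω then T ω / (T ω + U ω) else 0) ∂μ ≤
      μ.real {ω | U ω = 0} + μ[T] * ∫ ω, (U ω)⁻¹ ∂μ := by
  have hzero : MeasurableSet {ω | U ω = 0} := hUm (measurableSet_singleton 0)
  have hTUinv : T ⟂ᵢ[μ] fun ω => (U ω)⁻¹ := hTU.comp measurable_id measurable_inv
  have hprod : Integrable (fun ω => T ω * (U ω)⁻¹) μ := hTUinv.integrable_mul hT hUinv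
  have hind : Integrable ({ω | U ω = 0}.indicator (1 : Ω → ℝ)) μ :=
    (integrable_const 1).indicator hzero
  calc ∫ ω, (if 0 < T ω then T ω / (T ω + U ω) else 0) ∂μ
      ≤ ∫ ω, ({ω | U ω = 0}.indicator (1 : Ω → ℝ) ω + T ω * (U ω)⁻¹) ∂μ := by
        refine integral_mono_of_nonneg (ae_of_all _ fun ω => ?_) (hind.fun_add hprod)
          (ae_of_all _ fun ω => ratio_le_indicator_add_mul_inv (hT0 ω) (hU0 ω))
        show 0 ≤ ite _ _ _
        split_ifs
        exacts [div_nonneg (hT0 ω) (add_nonneg (hT0 ω) (hU0 ω)), le_rfl]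
    _ = μ.real {ω | U ω = 0} + μ[T] * ∫ ω, (U ω)⁻¹ ∂μ := by
        rw [integral_add hind hprod, integral_indicator_one hzero,
          hTUinv.integral_fun_mul_eq_mul_integral hT.1 hUinv.1]

end Ratio

theorem binomial_ratio_bound_general
    {Ω : Type*} [MeasurableSpace Ω] (μ : Measure Ω) [IsProbabilityMeasure μ]
    (m : ℕ) (hm : 1 ≤ m) (p : Fin m → ℝ) (hp : ∀ i, p i ∈ Set.Ioo (0 : ℝ) 1)
    (B : Fin m → Ω → ℝ)
    (hBmeas : ∀ i, Measurable (B i))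
    (hB01 : ∀ i ω, B i ω = 0 ∨ B i ω = 1)
    (hBp : ∀ i, μ {ω | B i ω = 1} = ENNReal.ofReal (p i))
    (hBindep : iIndepFun B μ)
    (T : Ω → ℝ) (hT0 : ∀ ω, 0 ≤ T ω)
    (hTint : Integrable T μ)
    (hTU : IndepFun T (fun ω => ∑ i, B i ω) μ) :
    ∫ ω, (if 0 < T ω then T ω / (T ω + ∑ i, B i ω) else 0) ∂μ ≤
      Real.exp (-(∑ i, p i)) + 12 * (∫ ω, T ω ∂μ) / (∑ i, p i) := by
  set U := fun ω => ∑ i, B i ω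
  have hU : ∀ ω, U ω = 0 ∨ 1 ≤ U ω := sum_eq_zero_or_one_le hB01
  have hUm : Measurable U := Finset.measurable_sum _ fun i _ => hBmeas i
  have hEU : μ[U] = ∑ i, p i := by
    rw [integral_sum_eq_sum_measureReal hB01 hBmeas]
    exact Finset.sum_congr rfl fun i _ => by
      rw [measureReal_def, hBp i, ENNReal.toReal_ofReal (hp i).1.le]
  have hpos : 0 < μ[U] := hEU ▸ Finset.sum_pos (fun i _ => (hp i).1) ⟨⟨0, hm⟩, Finset.mem_univ _⟩
  have hET : 0 ≤ μ[T] := integral_nonneg hT0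
  rw [← hEU]
  calc _ ≤ μ.real {ω | U ω = 0} + μ[T] * ∫ ω, (U ω)⁻¹ ∂μ :=
        integral_ratio_le hT0 hTint (fun ω => (hU ω).elim ge_of_eq (zero_le_one.trans ·))
          hUm (integrable_inv_of_eq_zero_or_one_le hU hUm) hTU
    _ ≤ Real.exp (-μ[U]) + μ[T] * (6 / μ[U]) := by
        gcongr
        · exact measureReal_sum_eq_zero_le_exp hB01 hBmeas hBindep
        · exact integral_inv_sum_le hB01 hBmeas (fun i j hij => hBindep.indepFun hij) hpos
    _ ≤ Real.exp (-μ[U]) + 12 * μ[T] / μ[U] := by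
        rw [mul_div_assoc', mul_comm]
        gcongr
        norm_num

/-- **Lemma (binomial denominator bound).** Let `U = Σ_{i=1}^m B_i` with `B_i` independent
Bernoulli(`p_i`) variables, `p_i ∈ (0,1)`, and let `T ≥ 0` be a (integrable) random variable
independent of `U`. Then `E[(T/(T+U))·1{T>0}] ≤ e^{−E[U]} + 12·E[T]/E[U]`
(here `E[U] = Σ_i p_i`). -/
theorem binomial_ratio_bound
    {Ω : Type*} [MeasurableSpace Ω] (μ : Measure Ω) [IsProbabilityMeasure μ]
    (m : ℕ) (hm : 1 ≤ m) (p : Fin m → ℝ) (hp : ∀ i, p i ∈ Set.Ioo (0 : ℝ) 1)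
    (B : Fin m → Ω → ℝ)
    (hBmeas : ∀ i, Measurable (B i))
    (hB01 : ∀ i ω, B i ω = 0 ∨ B i ω = 1)
    (hBp : ∀ i, μ {ω | B i ω = 1} = ENNReal.ofReal (p i))
    (hBindep : iIndepFun B μ)
    (T : Ω → ℝ) (hT0 : ∀ ω, 0 ≤ T ω) (hTmeas : Measurable T)
    (hTint : Integrable T μ)
    (hTU : IndepFun T (fun ω => ∑ i, B i ω) μ) :
    ∫ ω, (if 0 < T ω then T ω / (T ω + ∑ i, B i ω) else 0) ∂μ ≤
      Real.exp (-(∑ i, p i)) + 12 * (∫ ω, T ω ∂μ) / (∑ i, p i) :=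
  binomial_ratio_bound_general μ m hm p hp B hBmeas hB01 hBp hBindep T hT0 hTint hTU
end
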